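/- arXiv:1102.5151 — 2 statements merged into one kernel-verified Lean document; each statement's English description precedes it below -/
import Mathlib

section
/- Any pair of elements of a Cayley-Dickson loop Q_n generates a subloop isomorphic to a subgroup of the quaternion group of order 8; in particular every two-generated subloop of Q_n is an associative group. -/
/-- The underlying set of the Cayley-Dickson loop `Q n`:
`Q 0 = {±1}` (encoded as `Bool`, `false = 1`, `true = -1`) and `Q (n+1) = Q n × Bool`,
an element `(x, b)` encoding `(x, 0)` if `b = false` and `(x, 1)` if `b = true`. -/
def Q : ℕ → Type
  | 0 => Bool
  | n+1 => Q n × Bool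

namespace Q

def one : ∀ n, Q n
  | 0 => false
  | n+1 => (one n, false)

def neg : ∀ n, Q n → Q n
  | 0, x => !x
  | n+1, (x, b) => (neg n x, b)

def conj : ∀ n, Q n → Q n
  | 0, x => x
  | n+1, (x, false) => (conj n x, false)
  | n+1, (x, true) => (neg n x, true)

/-- Cayley-Dickson doubling multiplication restricted to the loop:
`(x,0)(y,0) = (xy,0)`, `(x,0)(y,1) = (yx,1)`, `(x,1)(y,0) = (xy*,1)`, `(x,1)(y,1) = (-y*x,0)`. -/
def mul : ∀ n, Q n → Q n → Q n
  | 0, x, y => xor x y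
  | n+1, (x, false), (y, false) => (mul n x y, false)
  | n+1, (x, false), (y, true)  => (mul n y x, true)
  | n+1, (x, true),  (y, false) => (mul n x (conj n y), true)
  | n+1, (x, true),  (y, true)  => (neg n (mul n (conj n y) x), false)

instance (n : ℕ) : One (Q n) := ⟨one n⟩
instance (n : ℕ) : Neg (Q n) := ⟨neg n⟩
instance (n : ℕ) : Mul (Q n) := ⟨mul n⟩
instance (n : ℕ) : Star (Q n) := ⟨conj n⟩
/-- In `Q n` the inverse of `x` is its conjugate `x*`. -/
instance (n : ℕ) : Inv (Q n) := ⟨conj n⟩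

instance instDecEq : ∀ n, DecidableEq (Q n)
  | 0 => inferInstanceAs (DecidableEq Bool)
  | n+1 => letI := instDecEq n; inferInstanceAs (DecidableEq (Q n × Bool))

instance instFintype : ∀ n, Fintype (Q n)
  | 0 => inferInstanceAs (Fintype Bool)
  | n+1 => letI := instFintype n; inferInstanceAs (Fintype (Q n × Bool))

/-- Powers in `Q n` (well defined by diassociativity). -/
def pow {n : ℕ} (x : Q n) : ℕ → Q n
  | 0 => 1
  | k+1 => x * pow x k

/-- The embedding `x ↦ (x, 0)` of `Q n` into `Q (n+1)`. -/
def up {n : ℕ} (x : Q n) : Q (n+1) := (x, false)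

/-- The map `x ↦ (x, 1)` from `Q n` into `Q (n+1)`. -/
def up1 {n : ℕ} (x : Q n) : Q (n+1) := (x, true)

/-- The commutator `[x,y]`, defined by `xy = (yx)[x,y]`. -/
def comm {n : ℕ} (x y : Q n) : Q n := (y * x)⁻¹ * (x * y)

/-- The associator `[x,y,z]`, defined by `(xy)z = (x(yz))[x,y,z]`. -/
def assoc {n : ℕ} (x y z : Q n) : Q n := (x * (y * z))⁻¹ * ((x * y) * z)

/-- A subloop of the Cayley-Dickson loop `Q n`: a subset containing `1` and closed
under multiplication and inverses (= conjugates). -/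
structure Subloop (n : ℕ) where
  carrier : Set (Q n)
  one_mem : (1 : Q n) ∈ carrier
  mul_mem : ∀ ⦃x y : Q n⦄, x ∈ carrier → y ∈ carrier → x * y ∈ carrier
  inv_mem : ∀ ⦃x : Q n⦄, x ∈ carrier → x⁻¹ ∈ carrier

/-- The subloop of `Q n` generated by a set `s`. -/
def closure (n : ℕ) (s : Set (Q n)) : Set (Q n) :=
  ⋂₀ {t : Set (Q n) | s ⊆ t ∧ (1 : Q n) ∈ t ∧
      (∀ x ∈ t, ∀ y ∈ t, x * y ∈ t) ∧ (∀ x ∈ t, x⁻¹ ∈ t)}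

end Q

/-!
Each `Q n` is an alternative loop in which `x⁻¹ = ±x`, so every `x ≠ ±1` satisfies
`x * x = -1`, and any two elements commute or anticommute. Hence two generators `x, y ∉ {±1}`
with `y ≠ ±x` anticommute, and `a 1 ↦ x`, `xa 0 ↦ y` extends to a multiplicative map
`Q₈ → Q n`; in the remaining cases the cyclic subgroup `⟨a 1⟩` (generator `x` or `y`) or the
centre `{1, a 2}` maps multiplicatively onto a set containing `x` and `y`. The image of a
subgroup is closed under products and inverses, so it contains the generated subloop. Since
`a 2 ↦ -1 ≠ 1` and every other nontrivial element of `Q₈` squares to `a 2`, the map is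
injective on the subgroup, and its inverse embeds the subloop in `Q₈`; associativity is then
pulled back from `Q₈`.
-/

theorem QuaternionGroup.mem_zpowers_a_one {m : ℕ} [NeZero m] {p : QuaternionGroup m} :
    p ∈ Subgroup.zpowers (a 1) ↔ ∃ k, a k = p := by
  rw [← mem_powers_iff_mem_zpowers, Submonoid.mem_powers_iff]
  constructor
  · rintro ⟨k, rfl⟩
    exact ⟨k, (a_one_pow k).symm⟩
  · rintro ⟨k, rfl⟩
    exact ⟨k.val, by rw [a_one_pow, ZMod.natCast_zmod_val]⟩

theorem QuaternionGroup.mem_center_two_iff {p : QuaternionGroup 2} :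
    p ∈ Subgroup.center (QuaternionGroup 2) ↔ p = 1 ∨ p = a 2 := by
  rw [Subgroup.mem_center_iff]
  revert p
  decide

theorem QuaternionGroup.eq_a_two_or_mul_self_of_ne_one :
    ∀ p : QuaternionGroup 2, p ≠ 1 → p = a 2 ∨ p * p = a 2 := by
  decide

theorem mul_assoc_of_injOn_of_map_mul {M G : Type*} [Mul M] [Semigroup G] {S : Set M}
    (hS : ∀ a ∈ S, ∀ b ∈ S, a * b ∈ S) {f : M → G} (hinj : Set.InjOn f S)
    (hf : ∀ a ∈ S, ∀ b ∈ S, f (a * b) = f a * f b) :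
    ∀ a ∈ S, ∀ b ∈ S, ∀ c ∈ S, a * b * c = a * (b * c) := by
  intro a ha b hb c hc
  refine hinj (hS _ (hS a ha b hb) c hc) (hS a ha _ (hS b hb c hc)) ?_
  rw [hf _ (hS a ha b hb) c hc, hf a ha b hb, hf a ha _ (hS b hb c hc), hf b hb c hc, mul_assoc]

namespace Q

variable {n : ℕ}

@[elab_as_elim] theorem up_cases {motive : Q (n + 1) → Prop} (a : Q (n + 1))
    (up : ∀ x, motive (up x)) (up1 : ∀ x, motive (up1 x)) : motive a :=
  match a with
  | (x, false) => up x
  | (x, true) => up1 x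

theorem up_inj {x y : Q n} : up x = up y ↔ x = y := ⟨congrArg Prod.fst, congrArg up⟩
theorem up1_inj {x y : Q n} : up1 x = up1 y ↔ x = y := ⟨congrArg Prod.fst, congrArg up1⟩
theorem up_ne_up1 (x y : Q n) : up x ≠ up1 y := fun h => Bool.noConfusion (congrArg Prod.snd h)

theorem one_succ : (1 : Q (n + 1)) = up 1 := rfl
theorem neg_up (x : Q n) : -up x = up (-x) := rfl
theorem neg_up1 (x : Q n) : -up1 x = up1 (-x) := rfl
theorem inv_up (x : Q n) : (up x)⁻¹ = up x⁻¹ := rfl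
theorem inv_up1 (x : Q n) : (up1 x)⁻¹ = up1 (-x) := rfl
theorem up_mul_up (x y : Q n) : up x * up y = up (x * y) := rfl
theorem up_mul_up1 (x y : Q n) : up x * up1 y = up1 (y * x) := rfl
theorem up1_mul_up (x y : Q n) : up1 x * up y = up1 (x * y⁻¹) := rfl
theorem up1_mul_up1 (x y : Q n) : up1 x * up1 y = up (-(y⁻¹ * x)) := rfl

@[simp] protected theorem neg_neg : ∀ {n} (a : Q n), -(-a) = a
  | 0, a => by revert a; decide
  | n + 1, a => by
    cases a using up_cases with
    | up x => rw [neg_up, neg_up, Q.neg_neg]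
    | up1 x => rw [neg_up1, neg_up1, Q.neg_neg]

protected theorem neg_ne_self : ∀ {n} (a : Q n), -a ≠ a
  | 0, a => by revert a; decide
  | n + 1, a => by
    cases a using up_cases with
    | up x => rw [neg_up, Ne, up_inj]; exact Q.neg_ne_self x
    | up1 x => rw [neg_up1, Ne, up1_inj]; exact Q.neg_ne_self x

theorem one_ne_neg_one : (1 : Q n) ≠ -1 := (Q.neg_ne_self 1).symm

@[simp] protected theorem inv_one : ∀ {n}, (1 : Q n)⁻¹ = 1
  | 0 => rfl
  | n + 1 => by rw [one_succ, inv_up, Q.inv_one]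

@[simp] protected theorem inv_neg : ∀ {n} (a : Q n), (-a)⁻¹ = -a⁻¹
  | 0, a => rfl
  | n + 1, a => by
    cases a using up_cases with
    | up x => rw [neg_up, inv_up, inv_up, neg_up, Q.inv_neg]
    | up1 x => rw [neg_up1, inv_up1, inv_up1, neg_up1]

@[simp] protected theorem inv_inv : ∀ {n} (a : Q n), a⁻¹⁻¹ = a
  | 0, a => rfl
  | n + 1, a => by
    cases a using up_cases with
    | up x => rw [inv_up, inv_up, Q.inv_inv]
    | up1 x => rw [inv_up1, inv_up1, Q.neg_neg]

@[simp] protected theorem mul_one : ∀ {n} (a : Q n), a * 1 = a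
  | 0, a => by revert a; decide
  | n + 1, a => by
    cases a using up_cases with
    | up x => rw [one_succ, up_mul_up, Q.mul_one]
    | up1 x => rw [one_succ, up1_mul_up, Q.inv_one, Q.mul_one]

@[simp] protected theorem one_mul : ∀ {n} (a : Q n), 1 * a = a
  | 0, a => by revert a; decide
  | n + 1, a => by
    cases a using up_cases with
    | up x => rw [one_succ, up_mul_up, Q.one_mul]
    | up1 x => rw [one_succ, up_mul_up1, Q.mul_one]

theorem neg_mul_and_mul_neg : ∀ {n} (a b : Q n), -a * b = -(a * b) ∧ a * -b = -(a * b)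
  | 0, a, b => by revert a b; decide
  | n + 1, a, b => by
    have ih := fun x y : Q n => neg_mul_and_mul_neg x y
    cases a using up_cases <;> cases b using up_cases <;>
      simp only [neg_up, neg_up1, up_mul_up, up_mul_up1, up1_mul_up, up1_mul_up1, Q.inv_neg, ih,
        and_self]

@[simp] protected theorem neg_mul (a b : Q n) : -a * b = -(a * b) := (neg_mul_and_mul_neg a b).1
@[simp] protected theorem mul_neg (a b : Q n) : a * -b = -(a * b) := (neg_mul_and_mul_neg a b).2

@[simp] protected theorem inv_mul_cancel : ∀ {n} (a : Q n), a⁻¹ * a = 1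
  | 0, a => by revert a; decide
  | n + 1, a => by
    cases a using up_cases with
    | up x => rw [inv_up, up_mul_up, Q.inv_mul_cancel, one_succ]
    | up1 x =>
      rw [inv_up1, up1_mul_up1, Q.mul_neg, Q.neg_neg, Q.inv_mul_cancel, one_succ]

@[simp] protected theorem mul_inv_cancel (a : Q n) : a * a⁻¹ = 1 := by
  simpa using Q.inv_mul_cancel a⁻¹

protected theorem mul_inv_rev : ∀ {n} (a b : Q n), (a * b)⁻¹ = b⁻¹ * a⁻¹
  | 0, a, b => by revert a b; decide
  | n + 1, a, b => by
    cases a using up_cases <;> cases b using up_cases <;>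
      simp only [inv_up, inv_up1, up_mul_up, up_mul_up1, up1_mul_up, up1_mul_up1, Q.mul_inv_rev,
        Q.inv_neg, Q.inv_inv, Q.neg_mul, Q.mul_neg, Q.neg_neg]

theorem inv_eq_self_or_neg : ∀ {n} (a : Q n), a⁻¹ = a ∨ a⁻¹ = -a
  | 0, a => .inl rfl
  | n + 1, a => by
    cases a using up_cases with
    | up x => rw [inv_up, neg_up, up_inj, up_inj]; exact inv_eq_self_or_neg x
    | up1 x => exact .inr rfl

theorem inv_eq_self_iff : ∀ {n} {a : Q n}, a⁻¹ = a ↔ a = 1 ∨ a = -1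
  | 0, a => by revert a; decide
  | n + 1, a => by
    cases a using up_cases with
    | up x => rw [inv_up, one_succ, neg_up, up_inj, up_inj, up_inj, inv_eq_self_iff]
    | up1 x =>
      rw [inv_up1, up1_inj, one_succ, neg_up]
      simp only [Q.neg_ne_self, false_iff, not_or]
      exact ⟨(up_ne_up1 _ _).symm, (up_ne_up1 _ _).symm⟩

theorem inv_eq_and_mul_self (a : Q n) :
    a⁻¹ = a ∧ a * a = 1 ∨ a⁻¹ = -a ∧ a * a = -1 := by
  rcases inv_eq_self_or_neg a with h | h
  · exact .inl ⟨h, by simpa [h] using Q.mul_inv_cancel a⟩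
  · exact .inr ⟨h, by simpa [h] using congrArg Neg.neg (Q.mul_inv_cancel a)⟩

theorem alternative_laws :
    ∀ {n} (a b : Q n), a * (a * b) = a * a * b ∧ a * b * b = a * (b * b)
  | 0, a, b => by revert a b; decide
  | n + 1, a, b => by
    have left := fun x y : Q n => (alternative_laws x y).1
    have right := fun x y : Q n => (alternative_laws x y).2
    cases a using up_cases with
    | _ x =>
      cases b using up_cases with
      | _ y =>
        rcases inv_eq_and_mul_self x with ⟨hx, hxx⟩ | ⟨hx, hxx⟩ <;>
          rcases inv_eq_and_mul_self y with ⟨hy, hyy⟩ | ⟨hy, hyy⟩ <;>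
          simp only [up_mul_up, up_mul_up1, up1_mul_up, up1_mul_up1, Q.mul_inv_rev, Q.inv_neg,
            Q.neg_mul, Q.mul_neg, Q.neg_neg, Q.one_mul, Q.mul_one, Q.inv_one, hx, hy, hxx, hyy,
            left, right, and_self]

protected theorem mul_mul_self_left (a b : Q n) : a * (a * b) = a * a * b :=
  (alternative_laws a b).1
protected theorem mul_mul_self_right (a b : Q n) : a * b * b = a * (b * b) :=
  (alternative_laws a b).2

theorem mul_comm_or_anticomm : ∀ {n} (a b : Q n), b * a = a * b ∨ b * a = -(a * b)
  | 0, a, b => by revert a b; decide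
  | n + 1, a, b => by
    cases a using up_cases with
    | _ x =>
      cases b using up_cases with
      | _ y =>
        rcases inv_eq_self_or_neg x with hx | hx <;> rcases inv_eq_self_or_neg y with hy | hy <;>
          rcases mul_comm_or_anticomm x y with h | h <;>
          simp only [neg_up, neg_up1, up_mul_up, up_mul_up1, up1_mul_up, up1_mul_up1, Q.neg_mul,
            Q.mul_neg, Q.neg_neg, hx, hy, h, up_inj, up1_inj, true_or, or_true]

theorem mul_self_eq_neg_one {a : Q n} (h1 : a ≠ 1) (h2 : a ≠ -1) : a * a = -1 := by
  rcases inv_eq_and_mul_self a with ⟨h, _⟩ | ⟨_, h⟩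
  · exact absurd (inv_eq_self_iff.1 h) (not_or.2 ⟨h1, h2⟩)
  · exact h

theorem inv_eq_neg_of_mul_self {a : Q n} (h : a * a = -1) : a⁻¹ = -a := by
  rcases inv_eq_and_mul_self a with ⟨_, h'⟩ | ⟨h', _⟩
  · exact absurd (h'.symm.trans h) one_ne_neg_one
  · exact h'

protected theorem inv_mul_cancel_left (a b : Q n) : a⁻¹ * (a * b) = b := by
  rcases inv_eq_and_mul_self a with ⟨h, haa⟩ | ⟨h, haa⟩ <;>
    simp [h, Q.mul_mul_self_left, haa]

protected theorem eq_inv_of_mul_eq_one_right {a b : Q n} (h : a * b = 1) : b = a⁻¹ := by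
  rw [← Q.inv_mul_cancel_left a b, h, Q.mul_one]

theorem mul_anticomm {x y : Q n} (hx1 : x ≠ 1) (hx2 : x ≠ -1) (hy1 : y ≠ 1) (hy2 : y ≠ -1)
    (hyx : y ≠ x) (hynx : y ≠ -x) : x * y = -(y * x) := by
  refine (mul_comm_or_anticomm y x).resolve_left fun hcomm => ?_
  have hinv : (x * y)⁻¹ = x * y := by
    rw [Q.mul_inv_rev, inv_eq_neg_of_mul_self (mul_self_eq_neg_one hx1 hx2),
      inv_eq_neg_of_mul_self (mul_self_eq_neg_one hy1 hy2), Q.neg_mul, Q.mul_neg, Q.neg_neg, hcomm]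
  have hxxy : x * (x * y) = -y := by
    rw [Q.mul_mul_self_left, mul_self_eq_neg_one hx1 hx2, Q.neg_mul, Q.one_mul]
  rcases inv_eq_self_iff.1 hinv with h | h
  · rw [h, Q.mul_one] at hxxy
    exact hynx (by rw [hxxy, Q.neg_neg])
  · rw [h, Q.mul_neg, Q.mul_one] at hxxy
    exact hyx (by simpa using (congrArg Neg.neg hxxy).symm)

theorem mul_mem_closure (s : Set (Q n)) :
    ∀ a ∈ closure n s, ∀ b ∈ closure n s, a * b ∈ closure n s :=
  fun a ha b hb => Set.mem_sInter.2 fun t ht =>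
    ht.2.2.1 a (Set.mem_sInter.1 ha t ht) b (Set.mem_sInter.1 hb t ht)

theorem closure_subset {s : Set (Q n)} (S : Subloop n) (h : s ⊆ S.carrier) :
    closure n s ⊆ S.carrier :=
  Set.sInter_subset_of_mem
    ⟨h, S.one_mem, fun _ ha _ hb => S.mul_mem ha hb, fun _ ha => S.inv_mem ha⟩

open QuaternionGroup

/-- `cyc u k` stands for `u ^ k` with `u ^ 2 = -1` built in (so `a 2 ↦ -1` for every `u`):
`quatMap u v` sends `a k ↦ u ^ k` and `xa k ↦ v * u ^ k`, i.e. `a 1 ↦ u` and `xa 0 ↦ v`.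
It is indexed by `Fin 4`, which `ZMod (2 * 2)` unfolds to. -/
def cyc (u : Q n) : Fin 4 → Q n := ![1, u, -1, -u]

def quatMap (u v : Q n) : QuaternionGroup 2 → Q n
  | a k => cyc u k
  | xa k => v * cyc u k

theorem quatMap_one (u v : Q n) : quatMap u v 1 = 1 := rfl
theorem quatMap_a_two (u v : Q n) : quatMap u v (a 2) = -1 := rfl

theorem cyc_add {u : Q n} (hu : u * u = -1) (i j : Fin 4) :
    cyc u (i + j) = cyc u i * cyc u j := by
  fin_cases i <;> fin_cases j <;> simp [cyc, hu]

structure IsQuaternionPair (u v : Q n) : Prop where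
  mul_self_left : u * u = -1
  mul_self_right : v * v = -1
  mul_comm : u * v = -(v * u)

theorem IsQuaternionPair.quatMap_mul {u v : Q n} (h : IsQuaternionPair u v)
    (p q : QuaternionGroup 2) :
    quatMap u v (p * q) = quatMap u v p * quatMap u v q := by
  obtain ⟨huu, hvv, huv⟩ := h
  have hvuu : v * u * u = -v := by rw [Q.mul_mul_self_right, huu, Q.mul_neg, Q.mul_one]
  have hvvu : v * (v * u) = -u := by rw [Q.mul_mul_self_left, hvv, Q.neg_mul, Q.one_mul]
  have huvu : u * (v * u) = v := by
    rw [← Q.neg_neg (v * u), ← huv, Q.mul_neg, Q.mul_mul_self_left, huu, Q.neg_mul, Q.one_mul,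
      Q.neg_neg]
  have hvuv : v * u * v = u := by
    rw [← Q.neg_neg (v * u), ← huv, Q.neg_mul, Q.mul_mul_self_right, hvv, Q.mul_neg, Q.mul_one,
      Q.neg_neg]
  have hvuvu : v * u * (v * u) = -1 := by
    have hinv : (v * u)⁻¹ = -(v * u) := by
      rw [Q.mul_inv_rev, inv_eq_neg_of_mul_self huu, inv_eq_neg_of_mul_self hvv, Q.neg_mul,
        Q.mul_neg, Q.neg_neg, huv]
    simpa [hinv] using congrArg Neg.neg (Q.mul_inv_cancel (v * u))
  -- `a_mul_xa`, `xa_mul_a` and `xa_mul_xa` of `QuaternionGroup 2`, read through `quatMap`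
  have table : ∀ i j : Fin 4, v * cyc u (j - i) = cyc u i * (v * cyc u j) ∧
      v * cyc u (i + j) = v * cyc u i * cyc u j ∧
      cyc u (2 + j - i) = v * cyc u i * (v * cyc u j) := by
    intro i j
    fin_cases i <;> fin_cases j <;> simp [cyc, hvv, huv, hvuu, hvvu, huvu, hvuv, hvuvu]
  rcases p with i | i <;> rcases q with j | j
  exacts [cyc_add huu i j, (table i j).1, (table i j).2.1, (table i j).2.2]

theorem quatMap_mul_of_mem_center (u v : Q n) :
    ∀ p ∈ Subgroup.center (QuaternionGroup 2), ∀ q ∈ Subgroup.center (QuaternionGroup 2),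
      quatMap u v (p * q) = quatMap u v p * quatMap u v q := by
  intro p hp q hq
  rcases mem_center_two_iff.1 hp with rfl | rfl
  · rw [_root_.one_mul, quatMap_one, Q.one_mul]
  rcases mem_center_two_iff.1 hq with rfl | rfl
  · rw [_root_.mul_one, quatMap_one, Q.mul_one]
  rw [show (a 2 * a 2 : QuaternionGroup 2) = 1 by decide, quatMap_one, quatMap_a_two, Q.neg_mul,
    Q.mul_neg, Q.one_mul, Q.neg_neg]

theorem quatMap_mul_of_mem_zpowers {u : Q n} (hu : u * u = -1) (v : Q n) :
    ∀ p ∈ Subgroup.zpowers (a 1 : QuaternionGroup 2), ∀ q ∈ Subgroup.zpowers (a 1),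
      quatMap u v (p * q) = quatMap u v p * quatMap u v q := by
  intro p hp q hq
  obtain ⟨i, rfl⟩ := mem_zpowers_a_one.1 hp
  obtain ⟨j, rfl⟩ := mem_zpowers_a_one.1 hq
  exact cyc_add hu i j

section
variable {u v : Q n} {G : Subgroup (QuaternionGroup 2)}
  (hmul : ∀ p ∈ G, ∀ q ∈ G, quatMap u v (p * q) = quatMap u v p * quatMap u v q)
include hmul

/-- Every `p ≠ 1` of `Q₈` is `a 2` or squares to it, and `quatMap` sends `a 2` to `-1 ≠ 1`:
so the kernel is trivial. -/
theorem injOn_quatMap : Set.InjOn (quatMap u v) G := by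
  intro p hp q hq hpq
  have hr : quatMap u v (q⁻¹ * p) = 1 := by
    rw [hmul _ (G.inv_mem hq) _ hp, hpq, ← hmul _ (G.inv_mem hq) _ hq, inv_mul_cancel,
      quatMap_one]
  refine (inv_mul_eq_one.1 ?_).symm
  by_contra hne
  apply (one_ne_neg_one : (1 : Q n) ≠ -1)
  rcases eq_a_two_or_mul_self_of_ne_one _ hne with h | h
  · rw [← quatMap_a_two u v, ← h, hr]
  · have hrr := hmul _ (G.mul_mem (G.inv_mem hq) hp) _ (G.mul_mem (G.inv_mem hq) hp)
    rwa [h, quatMap_a_two, hr, Q.one_mul, eq_comm] at hrr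

theorem closure_subset_image_quatMap {s : Set (Q n)} (hs : s ⊆ quatMap u v '' G) :
    closure n s ⊆ quatMap u v '' G := by
  refine closure_subset ⟨quatMap u v '' G, ⟨1, G.one_mem, quatMap_one u v⟩, ?_, ?_⟩ hs
  · rintro _ _ ⟨p, hp, rfl⟩ ⟨q, hq, rfl⟩
    exact ⟨p * q, G.mul_mem hp hq, hmul p hp q hq⟩
  · rintro _ ⟨p, hp, rfl⟩
    refine ⟨p⁻¹, G.inv_mem hp, Q.eq_inv_of_mul_eq_one_right ?_⟩
    rw [← hmul p hp _ (G.inv_mem hp), mul_inv_cancel, quatMap_one]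

end

def InQuaternionImage (s : Set (Q n)) : Prop :=
  ∃ (u v : Q n) (G : Subgroup (QuaternionGroup 2)),
    (∀ p ∈ G, ∀ q ∈ G, quatMap u v (p * q) = quatMap u v p * quatMap u v q) ∧
      s ⊆ quatMap u v '' G

theorem InQuaternionImage.exists_embedding {s : Set (Q n)} (h : InQuaternionImage s) :
    ∃ f : Q n → QuaternionGroup 2, Set.InjOn f (closure n s) ∧
      ∀ a ∈ closure n s, ∀ b ∈ closure n s, f (a * b) = f a * f b := by
  obtain ⟨u, v, G, hmul, hs⟩ := h
  have hsub := closure_subset_image_quatMap hmul hs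
  have hinv := (injOn_quatMap hmul).leftInvOn_invFunOn
  refine ⟨Function.invFunOn (quatMap u v) G,
    (Function.invFunOn_injOn_image _ _).mono hsub, fun a ha b hb => ?_⟩
  obtain ⟨p, hp, rfl⟩ := hsub ha
  obtain ⟨q, hq, rfl⟩ := hsub hb
  rw [← hmul p hp q hq, hinv (G.mul_mem hp hq), hinv hp, hinv hq]

theorem inQuaternionImage_of_eq_one_or_neg_one {x y : Q n} (hx : x = 1 ∨ x = -1)
    (hy : y = 1 ∨ y = -1) : InQuaternionImage {x, y} := by
  have hmem : ∀ z : Q n, z = 1 ∨ z = -1 →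
      z ∈ quatMap 1 1 '' (Subgroup.center (QuaternionGroup 2) : Set (QuaternionGroup 2)) := by
    rintro z (rfl | rfl)
    exacts [⟨1, Subgroup.one_mem _, rfl⟩, ⟨a 2, mem_center_two_iff.2 (.inr rfl), rfl⟩]
  exact ⟨1, 1, _, quatMap_mul_of_mem_center 1 1, Set.pair_subset (hmem x hx) (hmem y hy)⟩

theorem inQuaternionImage_of_mul_self_eq_neg_one {x y : Q n} (hx : x * x = -1)
    (hy : y = 1 ∨ y = -1 ∨ y = x ∨ y = -x) : InQuaternionImage {x, y} := by
  have hmem (k : ZMod (2 * 2)) :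
      quatMap x x (a k) ∈ quatMap x x '' (Subgroup.zpowers (a 1 : QuaternionGroup 2) : Set _) :=
    ⟨a k, mem_zpowers_a_one.2 ⟨k, rfl⟩, rfl⟩
  refine ⟨x, x, _, quatMap_mul_of_mem_zpowers hx x, Set.pair_subset (hmem 1) ?_⟩
  rcases hy with rfl | rfl | rfl | rfl
  exacts [hmem 0, hmem 2, hmem 1, hmem 3]

theorem IsQuaternionPair.inQuaternionImage {x y : Q n} (h : IsQuaternionPair x y) :
    InQuaternionImage {x, y} :=
  ⟨x, y, ⊤, fun p _ q _ => h.quatMap_mul p q,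
    Set.pair_subset ⟨a 1, trivial, rfl⟩ ⟨xa 0, trivial, Q.mul_one y⟩⟩

theorem isQuaternionPair_of_ne {x y : Q n} (hx1 : x ≠ 1) (hx2 : x ≠ -1) (hy1 : y ≠ 1)
    (hy2 : y ≠ -1) (hyx : y ≠ x) (hynx : y ≠ -x) : IsQuaternionPair x y :=
  ⟨mul_self_eq_neg_one hx1 hx2, mul_self_eq_neg_one hy1 hy2,
    mul_anticomm hx1 hx2 hy1 hy2 hyx hynx⟩

theorem inQuaternionImage_pair (x y : Q n) : InQuaternionImage {x, y} := by
  by_cases hx : x = 1 ∨ x = -1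
  · by_cases hy : y = 1 ∨ y = -1
    · exact inQuaternionImage_of_eq_one_or_neg_one hx hy
    · simp only [not_or] at hy
      rw [Set.pair_comm]
      exact inQuaternionImage_of_mul_self_eq_neg_one (mul_self_eq_neg_one hy.1 hy.2)
        (by rcases hx with h | h <;> simp [h])
  · simp only [not_or] at hx
    by_cases hy : y = 1 ∨ y = -1 ∨ y = x ∨ y = -x
    · exact inQuaternionImage_of_mul_self_eq_neg_one (mul_self_eq_neg_one hx.1 hx.2) hy
    · simp only [not_or] at hy
      exact (isQuaternionPair_of_ne hx.1 hx.2 hy.1 hy.2.1 hy.2.2.1 hy.2.2.2).inQuaternionImage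

end Q

/-- Any pair of elements of a Cayley-Dickson loop `Q n` generates a subloop isomorphic
to a subgroup of the quaternion group of order 8 (via an injective multiplication-preserving
map into `QuaternionGroup 2`); in particular every two-generated subloop of `Q n`
is associative. -/
theorem Q.two_generated_quaternion (n : ℕ) (x y : Q n) :
    (∃ f : Q n → QuaternionGroup 2,
      Set.InjOn f (Q.closure n {x, y}) ∧
      ∀ a ∈ Q.closure n {x, y}, ∀ b ∈ Q.closure n {x, y}, f (a * b) = f a * f b) ∧
    (∀ a ∈ Q.closure n {x, y}, ∀ b ∈ Q.closure n {x, y}, ∀ c ∈ Q.closure n {x, y},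
      (a * b) * c = a * (b * c)) := by
  obtain ⟨f, hinj, hf⟩ := (Q.inQuaternionImage_pair x y).exists_embedding
  exact ⟨⟨f, hinj, hf⟩, mul_assoc_of_injOn_of_map_mul (Q.mul_mem_closure _) hinj hf⟩
end

section
/- The quotient Q_n/{1,-1} of a Cayley-Dickson loop by its center is an abelian group isomorphic to (ℤ/2)^n. -/
namespace Q

def toVec : ∀ n, Q n → (Fin n → ZMod 2)
  | 0, _ => fun i => i.elim0
  | n+1, (x, b) => Fin.snoc (toVec n x) (if b then 1 else 0)

lemma snoc_add {n : ℕ} (u v : Fin n → ZMod 2) (a b : ZMod 2) :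
    (Fin.snoc u a : Fin (n+1) → ZMod 2) + (Fin.snoc v b : Fin (n+1) → ZMod 2) = Fin.snoc (u + v) (a + b) := by
  funext i
  refine Fin.lastCases ?_ ?_ i <;> simp

lemma snoc_eq_iff {n : ℕ} (u v : Fin n → ZMod 2) (a b : ZMod 2) :
    (Fin.snoc u a : Fin (n+1) → ZMod 2) = Fin.snoc v b ↔ u = v ∧ a = b := by
  constructor
  · intro h
    constructor
    · funext i
      have := congrFun h i.castSucc
      simpa using this
    · have := congrFun h (Fin.last n)
      simpa using this
  · rintro ⟨rfl, rfl⟩; rfl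

lemma toVec_neg : ∀ n (x : Q n), toVec n (neg n x) = toVec n x
  | 0, _ => funext fun i => i.elim0
  | n+1, (x, b) => by
    show (Fin.snoc (toVec n (neg n x)) (if b then 1 else 0) : Fin (n+1) → ZMod 2) = Fin.snoc (toVec n x) (if b then 1 else 0)
    rw [toVec_neg n x]

lemma toVec_conj : ∀ n (x : Q n), toVec n (conj n x) = toVec n x
  | 0, _ => rfl
  | n+1, (x, false) => by
    show (Fin.snoc (toVec n (conj n x)) (if false then 1 else 0) : Fin (n+1) → ZMod 2) = Fin.snoc (toVec n x) (if false then 1 else 0)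
    rw [toVec_conj n x]
  | n+1, (x, true) => by
    show (Fin.snoc (toVec n (neg n x)) (if true then 1 else 0) : Fin (n+1) → ZMod 2) = Fin.snoc (toVec n x) (if true then 1 else 0)
    rw [toVec_neg n x]

lemma toVec_mul : ∀ n (x y : Q n), toVec n (mul n x y) = toVec n x + toVec n y
  | 0, _, _ => funext fun i => i.elim0
  | n+1, (x, false), (y, false) => by
    show (Fin.snoc (toVec n (mul n x y)) 0 : Fin (n+1) → ZMod 2) = Fin.snoc (toVec n x) 0 + Fin.snoc (toVec n y) 0
    rw [toVec_mul n x y, snoc_add]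
    norm_num
  | n+1, (x, false), (y, true) => by
    show (Fin.snoc (toVec n (mul n y x)) 1 : Fin (n+1) → ZMod 2) = Fin.snoc (toVec n x) 0 + Fin.snoc (toVec n y) 1
    rw [toVec_mul n y x, snoc_add, add_comm (toVec n y)]
    norm_num
  | n+1, (x, true), (y, false) => by
    show (Fin.snoc (toVec n (mul n x (conj n y))) 1 : Fin (n+1) → ZMod 2) = Fin.snoc (toVec n x) 1 + Fin.snoc (toVec n y) 0
    rw [toVec_mul n x _, toVec_conj, snoc_add]
    norm_num
  | n+1, (x, true), (y, true) => by
    show (Fin.snoc (toVec n (neg n (mul n (conj n y) x))) 0 : Fin (n+1) → ZMod 2) = Fin.snoc (toVec n x) 1 + Fin.snoc (toVec n y) 1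
    rw [toVec_neg, toVec_mul n _ x, toVec_conj, snoc_add, add_comm (toVec n y)]
    have h11 : (1 : ZMod 2) + 1 = 0 := by decide
    rw [h11]

lemma toVec_eq : ∀ n (x y : Q n), toVec n x = toVec n y ↔ (x = y ∨ x = neg n y)
  | 0, x, y => by
    constructor
    · intro _
      have h : ∀ a b : Bool, a = b ∨ a = !b := by decide
      exact h x y
    · intro _; funext i; exact i.elim0
  | n+1, (x, b), (y, c) => by
    show (Fin.snoc (toVec n x) (if b then 1 else 0) : Fin (n+1) → ZMod 2) =
        Fin.snoc (toVec n y) (if c then 1 else 0) ↔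
      ((x, b) = (y, c) ∨ (x, b) = (neg n y, c))
    rw [snoc_eq_iff, toVec_eq n x y]
    have hbc : ((if b then (1:ZMod 2) else 0) = (if c then 1 else 0)) ↔ b = c := by
      cases b <;> cases c <;> simp
    rw [hbc]
    constructor
    · rintro ⟨h1 | h1, rfl⟩
      · exact Or.inl (by rw [h1])
      · exact Or.inr (by rw [h1])
    · rintro (h | h) <;> rw [Prod.ext_iff] at h <;>
        exact ⟨by tauto, h.2⟩

lemma toVec_surj : ∀ n, Function.Surjective (toVec n)
  | 0 => fun g => ⟨one 0, funext fun i => i.elim0⟩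
  | n+1 => by
    intro g
    obtain ⟨x, hx⟩ := toVec_surj n (g ∘ Fin.castSucc)
    refine ⟨(x, if g (Fin.last n) = 1 then true else false), ?_⟩
    show (Fin.snoc (toVec n x)
        (if (if g (Fin.last n) = 1 then true else false) then 1 else 0) : Fin (n+1) → ZMod 2) = g
    funext i
    refine Fin.lastCases ?_ ?_ i
    · simp only [Fin.snoc_last]
      have h2 : ∀ a : ZMod 2, (if (if a = 1 then true else false) then (1:ZMod 2) else 0) = a := by
        decide
      exact h2 _
    · intro i
      simp only [Fin.snoc_castSucc]
      exact congrFun hx i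

end Q

/-- The quotient `Q n / {1,-1}` of a Cayley-Dickson loop by its center is an abelian
group isomorphic to `(ℤ/2)^n`: there is a multiplicative surjection of `Q n` onto
`(ℤ/2)^n` whose fibers are exactly the cosets `{x, -x}`. -/
theorem Q.quotient_iso (n : ℕ) :
    ∃ f : Q n → Multiplicative (Fin n → ZMod 2),
      Function.Surjective f ∧
      (∀ x y : Q n, f (x * y) = f x * f y) ∧
      (∀ x y : Q n, f x = f y ↔ (x = y ∨ x = -y)) := by
  refine ⟨fun x => Multiplicative.ofAdd (toVec n x), ?_, ?_, ?_⟩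
  · intro g
    obtain ⟨x, hx⟩ := toVec_surj n g.toAdd
    exact ⟨x, by simp [hx]⟩
  · intro x y
    show Multiplicative.ofAdd (toVec n (mul n x y)) = _
    rw [toVec_mul]
    rfl
  · intro x y
    rw [Multiplicative.ofAdd.injective.eq_iff]
    exact toVec_eq n x y
end
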